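/- arXiv:1102.1350 — 12 statements merged into one kernel-verified Lean document; each statement's English description precedes it below -/
import Mathlib

section
/- If μ is a fuzzy right h-ideal of a Γ-hemiring S and x ∈ S, then the extension ⟨x,μ⟩ defined by ⟨x,μ⟩(y) = inf over s ∈ S and α,γ ∈ Γ of μ(xαsγy) is again a fuzzy right h-ideal of S. -/
/-- A `Γ`-hemiring structure on an additive commutative monoid `S`. -/
structure GammaHemiring (S Γ : Type*) [AddCommMonoid S] [AddCommMonoid Γ] where
  mul : S → Γ → S → S
  add_mul' : ∀ (a b : S) (α : Γ) (c : S), mul (a + b) α c = mul a α c + mul b α c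
  mul_add' : ∀ (a : S) (α : Γ) (b c : S), mul a α (b + c) = mul a α b + mul a α c
  gamma_add' : ∀ (a : S) (α β : Γ) (b : S), mul a (α + β) b = mul a α b + mul a β b
  mul_assoc' : ∀ (a : S) (α : Γ) (b : S) (β : Γ) (c : S),
    mul a α (mul b β c) = mul (mul a α b) β c
  zero_mul' : ∀ (α : Γ) (a : S), mul 0 α a = 0
  mul_zero' : ∀ (α : Γ) (a : S), mul a α 0 = 0
  gamma_zero' : ∀ (a b : S), mul a (0 : Γ) b = 0

variable {S Γ : Type*} [AddCommMonoid S] [AddCommMonoid Γ]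

/-- The extension `⟨x,μ⟩(y) = inf_{s∈S, α,γ∈Γ} μ(xαsγy)`. -/
noncomputable def ext (G : GammaHemiring S Γ) (μ : S → ℝ) (x y : S) : ℝ :=
  sInf {r : ℝ | ∃ (s : S) (α γ : Γ), r = μ (G.mul x α (G.mul s γ y))}

/-- A fuzzy subset takes values in `[0,1]`. -/
def IsFuzzy (μ : S → ℝ) : Prop := ∀ y, 0 ≤ μ y ∧ μ y ≤ 1

/-- Fuzzy right h-ideal. -/
def FuzzyRightHIdeal (G : GammaHemiring S Γ) (μ : S → ℝ) : Prop :=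
  IsFuzzy μ ∧
  (∀ x y : S, min (μ x) (μ y) ≤ μ (x + y)) ∧
  (∀ x y : S, ∀ γ : Γ, μ x ≤ μ (G.mul x γ y)) ∧
  (∀ x a b z : S, x + a + z = b + z → min (μ a) (μ b) ≤ μ x)

/-- Fuzzy (two-sided) h-ideal. -/
def FuzzyHIdeal (G : GammaHemiring S Γ) (μ : S → ℝ) : Prop :=
  IsFuzzy μ ∧
  (∀ x y : S, min (μ x) (μ y) ≤ μ (x + y)) ∧
  (∀ x y : S, ∀ γ : Γ, max (μ x) (μ y) ≤ μ (G.mul x γ y)) ∧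
  (∀ x a b z : S, x + a + z = b + z → min (μ a) (μ b) ≤ μ x)

theorem extension_of_fuzzy_right_h_ideal [Nonempty S] [Nonempty Γ]
    (G : GammaHemiring S Γ) (μ : S → ℝ) (h : FuzzyRightHIdeal G μ) (x : S) :
    FuzzyRightHIdeal G (ext G μ x) := by
  obtain ⟨hf, hadd, hmul, hh⟩ := h
  have hne : ∀ y : S, Set.Nonempty {r : ℝ | ∃ (s : S) (α γ : Γ),
      r = μ (G.mul x α (G.mul s γ y))} := by
    intro y
    exact ⟨_, Classical.arbitrary S, Classical.arbitrary Γ, Classical.arbitrary Γ, rfl⟩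
  have hbdd : ∀ y : S, BddBelow {r : ℝ | ∃ (s : S) (α γ : Γ),
      r = μ (G.mul x α (G.mul s γ y))} := by
    intro y
    refine ⟨0, ?_⟩
    rintro r ⟨s, α, γ, rfl⟩
    exact (hf _).1
  refine ⟨?_, ?_, ?_, ?_⟩
  · intro y
    constructor
    · exact le_csInf (hne y) (by rintro r ⟨s, α, γ, rfl⟩; exact (hf _).1)
    · obtain ⟨r, hr⟩ := hne y
      exact le_trans (csInf_le (hbdd y) hr) (by obtain ⟨s, α, γ, rfl⟩ := hr; exact (hf _).2)
  · intro y₁ y₂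
    refine le_csInf (hne _) ?_
    rintro r ⟨s, α, γ, rfl⟩
    have : G.mul x α (G.mul s γ (y₁ + y₂))
        = G.mul x α (G.mul s γ y₁) + G.mul x α (G.mul s γ y₂) := by
      rw [G.mul_add', G.mul_add']
    rw [this]
    refine le_trans ?_ (hadd _ _)
    exact min_le_min (csInf_le (hbdd y₁) ⟨s, α, γ, rfl⟩)
      (csInf_le (hbdd y₂) ⟨s, α, γ, rfl⟩)
  · intro y z γ'
    refine le_csInf (hne _) ?_
    rintro r ⟨s, α, γ, rfl⟩
    have : G.mul x α (G.mul s γ (G.mul y γ' z))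
        = G.mul (G.mul x α (G.mul s γ y)) γ' z := by
      rw [G.mul_assoc', G.mul_assoc', G.mul_assoc']
    rw [this]
    exact le_trans (csInf_le (hbdd y) ⟨s, α, γ, rfl⟩) (hmul _ _ _)
  · intro y a b z hz
    refine le_csInf (hne _) ?_
    rintro r ⟨s, α, γ, rfl⟩
    have key : G.mul x α (G.mul s γ y) + G.mul x α (G.mul s γ a) + G.mul x α (G.mul s γ z)
        = G.mul x α (G.mul s γ b) + G.mul x α (G.mul s γ z) := by
      simp only [← G.mul_add']; rw [hz]
    refine le_trans ?_ (hh _ _ _ _ key)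
    exact min_le_min (csInf_le (hbdd a) ⟨s, α, γ, rfl⟩)
      (csInf_le (hbdd b) ⟨s, α, γ, rfl⟩)
end

section
/- If {μ_i} is an arbitrary family of fuzzy h-ideals of a Γ-hemiring S and x ∈ S, then ⟨x, ⋂_i μ_i⟩ is a fuzzy h-ideal of S, where (⋂_i μ_i)(y) = inf_i μ_i(y). -/
variable {S Γ : Type*} [AddCommMonoid S] [AddCommMonoid Γ]

lemma iInf_fuzzy_h_ideal (G : GammaHemiring S Γ) {ι : Type*} [Nonempty ι] (μ : ι → S → ℝ)
    (h : ∀ i, FuzzyHIdeal G (μ i)) : FuzzyHIdeal G (fun y => ⨅ i, μ i y) := by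
  have bdd : ∀ y : S, BddBelow (Set.range fun i => μ i y) := by
    intro y
    exact ⟨0, by rintro r ⟨i, rfl⟩; exact ((h i).1 y).1⟩
  refine ⟨?_, ?_, ?_, ?_⟩
  · intro y
    constructor
    · exact le_ciInf fun i => ((h i).1 y).1
    · exact le_trans (ciInf_le (bdd y) (Classical.arbitrary ι))
        (((h (Classical.arbitrary ι)).1 y).2)
  · intro a b
    exact le_ciInf fun i =>
      le_trans (min_le_min (ciInf_le (bdd a) i) (ciInf_le (bdd b) i)) ((h i).2.1 a b)
  · intro a b γ
    exact le_ciInf fun i =>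
      le_trans (max_le_max (ciInf_le (bdd a) i) (ciInf_le (bdd b) i)) ((h i).2.2.1 a b γ)
  · intro y a b z hz
    exact le_ciInf fun i =>
      le_trans (min_le_min (ciInf_le (bdd a) i) (ciInf_le (bdd b) i)) ((h i).2.2.2 y a b z hz)

lemma ext_fuzzy_h_ideal [Nonempty S] [Nonempty Γ] (G : GammaHemiring S Γ) {ν : S → ℝ}
    (hν : FuzzyHIdeal G ν) (x : S) : FuzzyHIdeal G (ext G ν x) := by
  set T : S → Set ℝ := fun y => {r : ℝ | ∃ (s : S) (α γ : Γ), r = ν (G.mul x α (G.mul s γ y))}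
    with hT
  have hnonempty : ∀ y, (T y).Nonempty := fun y =>
    ⟨ν (G.mul x (Classical.arbitrary Γ) (G.mul (Classical.arbitrary S) (Classical.arbitrary Γ) y)),
      Classical.arbitrary S, Classical.arbitrary Γ, Classical.arbitrary Γ, rfl⟩
  have hbdd : ∀ y, BddBelow (T y) := by
    intro y
    refine ⟨0, ?_⟩
    rintro r ⟨s, α, γ, rfl⟩
    exact (hν.1 _).1
  have hext : ∀ y, ext G ν x y = sInf (T y) := fun y => rfl
  refine ⟨?_, ?_, ?_, ?_⟩
  · intro y
    rw [hext]
    constructor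
    · exact le_csInf (hnonempty y) (by rintro r ⟨s, α, γ, rfl⟩; exact (hν.1 _).1)
    · exact le_trans (csInf_le (hbdd y)
        ⟨Classical.arbitrary S, Classical.arbitrary Γ, Classical.arbitrary Γ, rfl⟩) (hν.1 _).2
  · intro a b
    rw [hext, hext, hext]
    refine le_csInf (hnonempty _) ?_
    rintro r ⟨s, α, γ, rfl⟩
    rw [G.mul_add', G.mul_add']
    refine le_trans (min_le_min ?_ ?_) (hν.2.1 _ _)
    · exact csInf_le (hbdd a) ⟨s, α, γ, rfl⟩
    · exact csInf_le (hbdd b) ⟨s, α, γ, rfl⟩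
  · intro a b γ
    rw [hext, hext, hext]
    refine le_csInf (hnonempty _) ?_
    rintro r ⟨s, α, γ', rfl⟩
    rw [G.mul_assoc' s γ' a γ b]
    refine max_le ?_ ?_
    · rw [G.mul_assoc' x α (G.mul s γ' a) γ b]
      refine le_trans (csInf_le (hbdd a) ⟨s, α, γ', rfl⟩) ?_
      exact le_trans (le_max_left _ (ν b)) (hν.2.2.1 _ b γ)
    · exact csInf_le (hbdd b) ⟨G.mul s γ' a, α, γ, rfl⟩
  · intro y a b z hz
    rw [hext, hext, hext]
    refine le_csInf (hnonempty _) ?_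
    rintro r ⟨s, α, γ, rfl⟩
    have key : G.mul x α (G.mul s γ y) + G.mul x α (G.mul s γ a) + G.mul x α (G.mul s γ z)
        = G.mul x α (G.mul s γ b) + G.mul x α (G.mul s γ z) := by
      have := congrArg (fun t => G.mul x α (G.mul s γ t)) hz
      simpa only [G.mul_add'] using this
    refine le_trans (min_le_min ?_ ?_) (hν.2.2.2 _ _ _ _ key)
    · exact csInf_le (hbdd a) ⟨s, α, γ, rfl⟩
    · exact csInf_le (hbdd b) ⟨s, α, γ, rfl⟩

theorem extension_of_intersection_of_fuzzy_h_ideals [Nonempty S] [Nonempty Γ]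
    (G : GammaHemiring S Γ) {ι : Type*} [Nonempty ι] (μ : ι → S → ℝ)
    (h : ∀ i, FuzzyHIdeal G (μ i)) (x : S) :
    FuzzyHIdeal G (ext G (fun y => ⨅ i, μ i y) x) :=
  ext_fuzzy_h_ideal G (iInf_fuzzy_h_ideal G μ h) x
end

section
/- Let f : R → S be a homomorphism of Γ-hemirings and φ a fuzzy right h-ideal of S. Then for any z ∈ R, the extension ⟨z, f⁻¹(φ)⟩ is a fuzzy right h-ideal of R, where f⁻¹(φ)(x) = φ(f(x)). -/
variable {S Γ : Type*} [AddCommMonoid S] [AddCommMonoid Γ]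

/-- A homomorphism of `Γ`-hemirings. -/
def IsGammaHom {R : Type*} [AddCommMonoid R] (G : GammaHemiring R Γ)
    (H : GammaHemiring S Γ) (f : R → S) : Prop :=
  (∀ a b : R, f (a + b) = f a + f b) ∧
  (∀ (a : R) (γ : Γ) (b : R), f (G.mul a γ b) = H.mul (f a) γ (f b)) ∧
  f 0 = 0

theorem extension_of_preimage_fuzzy_right_h_ideal {R : Type*} [AddCommMonoid R]
    [Nonempty R] [Nonempty Γ]
    (G : GammaHemiring R Γ) (H : GammaHemiring S Γ) (f : R → S)
    (hf : IsGammaHom G H f) (φ : S → ℝ) (hφ : FuzzyRightHIdeal H φ) (z : R) :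
    FuzzyRightHIdeal G (ext G (fun x => φ (f x)) z) := by
  obtain ⟨hadd, hmul, hzero⟩ := hf
  obtain ⟨hφ0, hφadd, hφmul, hφh⟩ := hφ
  set μ : R → ℝ := fun x => φ (f x) with hμdef
  have hμ0 : ∀ x, 0 ≤ μ x ∧ μ x ≤ 1 := fun x => hφ0 (f x)
  have hμadd : ∀ x y, min (μ x) (μ y) ≤ μ (x + y) := fun x y => by
    simp only [hμdef, hadd]; exact hφadd (f x) (f y)
  have hμmul : ∀ x y γ, μ x ≤ μ (G.mul x γ y) := fun x y γ => by
    simp only [hμdef, hmul]; exact hφmul (f x) (f y) γ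
  have hμh : ∀ x a b w, x + a + w = b + w → min (μ a) (μ b) ≤ μ x := fun x a b w h => by
    apply hφh (f x) (f a) (f b) (f w)
    rw [← hadd, ← hadd, ← hadd, h]
  have hne : ∀ y, Set.Nonempty {r : ℝ | ∃ s α γ, r = μ (G.mul z α (G.mul s γ y))} := by
    intro y
    obtain ⟨s⟩ := ‹Nonempty R›
    obtain ⟨α⟩ := ‹Nonempty Γ›
    exact ⟨_, s, α, α, rfl⟩
  have hbdd : ∀ y, BddBelow {r : ℝ | ∃ s α γ, r = μ (G.mul z α (G.mul s γ y))} := by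
    intro y
    exact ⟨0, fun r ⟨s, α, γ, hr⟩ => hr ▸ (hμ0 _).1⟩
  have hle : ∀ y s α γ, ext G μ z y ≤ μ (G.mul z α (G.mul s γ y)) := fun y s α γ =>
    csInf_le (hbdd y) ⟨s, α, γ, rfl⟩
  refine ⟨fun y => ⟨?_, ?_⟩, ?_, ?_, ?_⟩
  · exact le_csInf (hne y) (fun r ⟨s, α, γ, hr⟩ => hr ▸ (hμ0 _).1)
  · obtain ⟨s⟩ := ‹Nonempty R›
    obtain ⟨α⟩ := ‹Nonempty Γ›
    exact le_trans (hle y s α α) (hμ0 _).2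
  · intro x y
    apply le_csInf (hne _)
    rintro r ⟨s, α, γ, rfl⟩
    rw [G.mul_add', G.mul_add']
    calc min (ext G μ z x) (ext G μ z y)
        ≤ min (μ (G.mul z α (G.mul s γ x))) (μ (G.mul z α (G.mul s γ y))) :=
          min_le_min (hle x s α γ) (hle y s α γ)
      _ ≤ _ := hμadd _ _
  · intro x y γ'
    apply le_csInf (hne _)
    rintro r ⟨s, α, γ, rfl⟩
    have h2 : G.mul z α (G.mul s γ (G.mul x γ' y)) = G.mul (G.mul z α (G.mul s γ x)) γ' y := by
      rw [G.mul_assoc' s γ x γ' y, G.mul_assoc']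
    rw [h2]
    exact le_trans (hle x s α γ) (hμmul _ y γ')
  · intro x a b w h
    apply le_csInf (hne _)
    rintro r ⟨s, α, γ, rfl⟩
    have heq : G.mul z α (G.mul s γ x) + G.mul z α (G.mul s γ a) + G.mul z α (G.mul s γ w)
        = G.mul z α (G.mul s γ b) + G.mul z α (G.mul s γ w) := by
      have hdist : ∀ u v : R, G.mul z α (G.mul s γ (u + v))
          = G.mul z α (G.mul s γ u) + G.mul z α (G.mul s γ v) := fun u v => by
        rw [G.mul_add', G.mul_add']
      rw [← hdist, ← hdist, ← hdist, h]
    exact le_trans (min_le_min (hle a s α γ) (hle b s α γ)) (hμh _ _ _ _ heq)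
end

section
/- If S is a commutative Γ-hemiring and μ is a fuzzy h-bi-ideal of S, then for any x ∈ S the extension ⟨x,μ⟩ is also a fuzzy h-bi-ideal of S. -/
variable {S Γ : Type*} [AddCommMonoid S] [AddCommMonoid Γ]

/-- Fuzzy h-bi-ideal. -/
def FuzzyHBiIdeal (G : GammaHemiring S Γ) (μ : S → ℝ) : Prop :=
  FuzzyHIdeal G μ ∧
  ∀ (x y z : S) (α β : Γ), min (μ x) (μ z) ≤ μ (G.mul (G.mul x α y) β z)

theorem extension_of_fuzzy_h_bi_ideal (G : GammaHemiring S Γ)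
    (hcomm : ∀ (a b : S) (α : Γ), G.mul a α b = G.mul b α a)
    (μ : S → ℝ) (h : FuzzyHBiIdeal G μ) (x : S) :
    FuzzyHBiIdeal G (ext G μ x) := by
  obtain ⟨⟨hfz, hadd, hmul, hh⟩, hbi⟩ := h
  have hmem : ∀ (y s : S) (α γ : Γ),
      μ (G.mul x α (G.mul s γ y)) ∈ {r : ℝ | ∃ s α γ, r = μ (G.mul x α (G.mul s γ y))} :=
    fun y s α γ => ⟨s, α, γ, rfl⟩
  have hne : ∀ y : S, Set.Nonempty {r : ℝ | ∃ s α γ, r = μ (G.mul x α (G.mul s γ y))} :=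
    fun y => ⟨_, hmem y 0 0 0⟩
  have hbdd : ∀ y : S, BddBelow {r : ℝ | ∃ s α γ, r = μ (G.mul x α (G.mul s γ y))} := by
    intro y
    refine ⟨0, ?_⟩
    rintro r ⟨s, α, γ, rfl⟩
    exact (hfz _).1
  have hle : ∀ (y s : S) (α γ : Γ), ext G μ x y ≤ μ (G.mul x α (G.mul s γ y)) :=
    fun y s α γ => csInf_le (hbdd y) (hmem y s α γ)
  have hge : ∀ (y : S) (c : ℝ),
      (∀ (s : S) (α γ : Γ), c ≤ μ (G.mul x α (G.mul s γ y))) → c ≤ ext G μ x y := by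
    intro y c hc
    apply le_csInf (hne y)
    rintro r ⟨s, α, γ, rfl⟩
    exact hc s α γ
  refine ⟨⟨?_, ?_, ?_, ?_⟩, ?_⟩
  · intro y
    constructor
    · exact hge y 0 fun s α γ => (hfz _).1
    · calc ext G μ x y ≤ μ (G.mul x 0 (G.mul 0 0 y)) := hle y 0 0 0
        _ ≤ 1 := (hfz _).2
  · intro a b
    apply hge
    intro s α γ
    have e : G.mul x α (G.mul s γ (a + b)) = G.mul x α (G.mul s γ a) + G.mul x α (G.mul s γ b) := by
      rw [G.mul_add', G.mul_add']
    rw [e]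
    exact le_trans (min_le_min (hle a s α γ) (hle b s α γ)) (hadd _ _)
  · intro a b γ0
    apply hge
    intro s α γ
    apply max_le
    · have e : G.mul x α (G.mul s γ (G.mul a γ0 b)) =
          G.mul x α (G.mul (G.mul s γ b) γ0 a) := by
        rw [hcomm a b γ0, G.mul_assoc' s γ b γ0 a]
      rw [e]
      exact hle a _ _ _
    · have e : G.mul x α (G.mul s γ (G.mul a γ0 b)) =
          G.mul x α (G.mul (G.mul s γ a) γ0 b) := by
        rw [G.mul_assoc' s γ a γ0 b]
      rw [e]
      exact hle b _ _ _
  · intro y a b z heq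
    apply hge
    intro s α γ
    have heq2 : G.mul x α (G.mul s γ y) + G.mul x α (G.mul s γ a) + G.mul x α (G.mul s γ z)
        = G.mul x α (G.mul s γ b) + G.mul x α (G.mul s γ z) := by
      simp only [← G.mul_add', heq]
    exact le_trans (min_le_min (hle a s α γ) (hle b s α γ)) (hh _ _ _ _ heq2)
  · intro a b c α0 β0
    refine le_trans (min_le_right _ _) ?_
    apply hge
    intro s α γ
    have e : G.mul x α (G.mul s γ (G.mul (G.mul a α0 b) β0 c)) =
        G.mul x α (G.mul (G.mul s γ (G.mul a α0 b)) β0 c) := by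
      rw [G.mul_assoc' s γ (G.mul a α0 b) β0 c]
    rw [e]
    exact hle c _ _ _
end

section
/- If S is a commutative Γ-hemiring and μ is a fuzzy h-interior-ideal of S, then for any x ∈ S the extension ⟨x,μ⟩ is also a fuzzy h-interior-ideal of S. -/
variable {S Γ : Type*} [AddCommMonoid S] [AddCommMonoid Γ]

/-- Fuzzy h-interior-ideal. -/
def FuzzyHInteriorIdeal (G : GammaHemiring S Γ) (μ : S → ℝ) : Prop :=
  FuzzyHIdeal G μ ∧
  ∀ (x y z : S) (α β : Γ), μ y ≤ μ (G.mul (G.mul x α y) β z)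

section ExtLemmas

variable (G : GammaHemiring S Γ) (μ : S → ℝ) (x : S)

lemma ext_set_nonempty (y : S) :
    {r : ℝ | ∃ (s : S) (α γ : Γ), r = μ (G.mul x α (G.mul s γ y))}.Nonempty :=
  ⟨μ (G.mul x 0 (G.mul 0 0 y)), 0, 0, 0, rfl⟩

lemma ext_set_bddBelow (hμ : IsFuzzy μ) (y : S) :
    BddBelow {r : ℝ | ∃ (s : S) (α γ : Γ), r = μ (G.mul x α (G.mul s γ y))} := by
  refine ⟨0, fun r hr => ?_⟩
  obtain ⟨s, α, γ, rfl⟩ := hr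
  exact (hμ _).1

lemma ext_le (hμ : IsFuzzy μ) (y s : S) (α γ : Γ) :
    ext G μ x y ≤ μ (G.mul x α (G.mul s γ y)) :=
  csInf_le (ext_set_bddBelow G μ x hμ y) ⟨s, α, γ, rfl⟩

lemma le_ext (y : S) (r : ℝ)
    (hr : ∀ (s : S) (α γ : Γ), r ≤ μ (G.mul x α (G.mul s γ y))) :
    r ≤ ext G μ x y := by
  refine le_csInf (ext_set_nonempty G μ x y) ?_
  rintro b ⟨s, α, γ, rfl⟩
  exact hr s α γ

end ExtLemmas

theorem extension_of_fuzzy_h_interior_ideal (G : GammaHemiring S Γ)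
    (hcomm : ∀ (a b : S) (α : Γ), G.mul a α b = G.mul b α a)
    (μ : S → ℝ) (h : FuzzyHInteriorIdeal G μ) (x : S) :
    FuzzyHInteriorIdeal G (ext G μ x) := by
  obtain ⟨⟨hμ, hadd, hmul, hh⟩, hint⟩ := h
  refine ⟨⟨?_, ?_, ?_, ?_⟩, ?_⟩
  · -- IsFuzzy
    intro y
    constructor
    · exact le_ext G μ x y 0 fun s α γ => (hμ _).1
    · exact le_trans (ext_le G μ x hμ y 0 0 0) (hμ _).2
  · -- additivity
    intro a b
    refine le_ext G μ x _ _ fun s α γ => ?_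
    have : G.mul x α (G.mul s γ (a + b))
        = G.mul x α (G.mul s γ a) + G.mul x α (G.mul s γ b) := by
      rw [G.mul_add', G.mul_add']
    rw [this]
    calc min (ext G μ x a) (ext G μ x b)
        ≤ min (μ (G.mul x α (G.mul s γ a))) (μ (G.mul x α (G.mul s γ b))) :=
          min_le_min (ext_le G μ x hμ a s α γ) (ext_le G μ x hμ b s α γ)
      _ ≤ _ := hadd _ _
  · -- multiplicativity
    intro a b γ
    refine le_ext G μ x _ _ fun s α η => ?_
    apply max_le
    · -- ext a ≤ μ (x α (s η (a γ b)))
      have e1 : G.mul x α (G.mul s η (G.mul a γ b))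
          = G.mul (G.mul x α (G.mul s η a)) γ b := by
        rw [G.mul_assoc' s η a γ, ← G.mul_assoc' x α (G.mul s η a) γ b]
      rw [e1]
      calc ext G μ x a ≤ μ (G.mul x α (G.mul s η a)) := ext_le G μ x hμ a s α η
        _ ≤ max (μ (G.mul x α (G.mul s η a))) (μ b) := le_max_left _ _
        _ ≤ _ := hmul _ _ _
    · have e1 : G.mul x α (G.mul s η (G.mul a γ b))
          = G.mul (G.mul x α (G.mul s η b)) γ a := by
        rw [hcomm a b γ, G.mul_assoc' s η b γ, ← G.mul_assoc' x α (G.mul s η b) γ a]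
      rw [e1]
      calc ext G μ x b ≤ μ (G.mul x α (G.mul s η b)) := ext_le G μ x hμ b s α η
        _ ≤ max (μ (G.mul x α (G.mul s η b))) (μ a) := le_max_left _ _
        _ ≤ _ := hmul _ _ _
  · -- h-condition
    intro w a b z hw
    refine le_ext G μ x _ _ fun s α γ => ?_
    have key : G.mul x α (G.mul s γ w) + G.mul x α (G.mul s γ a)
        + G.mul x α (G.mul s γ z)
        = G.mul x α (G.mul s γ b) + G.mul x α (G.mul s γ z) := by
      simp only [← G.mul_add']
      rw [hw]
    calc min (ext G μ x a) (ext G μ x b)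
        ≤ min (μ (G.mul x α (G.mul s γ a))) (μ (G.mul x α (G.mul s γ b))) :=
          min_le_min (ext_le G μ x hμ a s α γ) (ext_le G μ x hμ b s α γ)
      _ ≤ _ := hh _ _ _ _ key
  · -- interior condition
    intro u y z α β
    refine le_ext G μ x _ _ fun s η γ => ?_
    have e1 : G.mul x η (G.mul s γ (G.mul (G.mul u α y) β z))
        = G.mul x η (G.mul (G.mul s γ (G.mul z β u)) α y) := by
      rw [hcomm (G.mul u α y) z β, G.mul_assoc' z β u α, G.mul_assoc' s γ (G.mul z β u) α y]
    rw [e1]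
    exact ext_le G μ x hμ y _ η α
end

section
/- If μ is a fuzzy h-ideal of a Γ-hemiring S, then for any x ∈ S, ⟨x, μ⁺⟩ is a fuzzy h-ideal of S, where μ⁺(y) = μ(y) − μ(0) + 1. -/
variable {S Γ : Type*} [AddCommMonoid S] [AddCommMonoid Γ]

theorem extension_of_mu_plus (G : GammaHemiring S Γ) (μ : S → ℝ)
    (h : FuzzyHIdeal G μ) (x : S) :
    FuzzyHIdeal G (ext G (fun y => μ y - μ 0 + 1) x) := by
  obtain ⟨hf, hadd, hmul, hh⟩ := h
  set ν : S → ℝ := fun y => μ y - μ 0 + 1 with hνdef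
  have hle0 : ∀ y, μ y ≤ μ 0 := by
    intro y
    have := hmul y y 0
    simpa [G.gamma_zero'] using this
  -- ν properties
  have hνf : ∀ y, 0 ≤ ν y ∧ ν y ≤ 1 := by
    intro y
    have h1 := (hf y).1
    have h2 := (hf 0).2
    have h3 := hle0 y
    constructor <;> simp [hνdef] <;> linarith
  have hν0 : ν 0 = 1 := by simp [hνdef]
  have hshift : ∀ p q r : ℝ, min p q ≤ r → min (p - μ 0 + 1) (q - μ 0 + 1) ≤ r - μ 0 + 1 := by
    intro p q r hpq
    rcases le_total p q with h' | h'
    · rw [min_eq_left h'] at hpq; rw [min_eq_left (by linarith)]; linarith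
    · rw [min_eq_right h'] at hpq; rw [min_eq_right (by linarith)]; linarith
  have hshiftmax : ∀ p q r : ℝ, max p q ≤ r → max (p - μ 0 + 1) (q - μ 0 + 1) ≤ r - μ 0 + 1 := by
    intro p q r hpq
    rcases le_total p q with h' | h'
    · rw [max_eq_right h'] at hpq; rw [max_eq_right (by linarith)]; linarith
    · rw [max_eq_left h'] at hpq; rw [max_eq_left (by linarith)]; linarith
  have hνadd : ∀ a b : S, min (ν a) (ν b) ≤ ν (a + b) := fun a b => hshift _ _ _ (hadd a b)
  have hνmul : ∀ a b : S, ∀ γ : Γ, max (ν a) (ν b) ≤ ν (G.mul a γ b) :=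
    fun a b γ => hshiftmax _ _ _ (hmul a b γ)
  have hνh : ∀ w a b z : S, w + a + z = b + z → min (ν a) (ν b) ≤ ν w :=
    fun w a b z hz => hshift _ _ _ (hh w a b z hz)
  -- the sets
  set T : S → Set ℝ := fun y => {r : ℝ | ∃ (s : S) (α γ : Γ), r = ν (G.mul x α (G.mul s γ y))}
    with hTdef
  have hmem : ∀ (y s : S) (α γ : Γ), ν (G.mul x α (G.mul s γ y)) ∈ T y := by
    intro y s α γ; exact ⟨s, α, γ, rfl⟩
  have hne : ∀ y, (T y).Nonempty := by
    intro y
    exact ⟨ν (G.mul x 0 (G.mul 0 0 y)), hmem y 0 0 0⟩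
  have hbdd : ∀ y, BddBelow (T y) := by
    intro y
    refine ⟨0, ?_⟩
    rintro r ⟨s, α, γ, rfl⟩
    exact (hνf _).1
  have hfle : ∀ (y s : S) (α γ : Γ), ext G ν x y ≤ ν (G.mul x α (G.mul s γ y)) := by
    intro y s α γ
    exact csInf_le (hbdd y) (hmem y s α γ)
  refine ⟨?_, ?_, ?_, ?_⟩
  · -- IsFuzzy
    intro y
    constructor
    · exact le_csInf (hne y) (by rintro r ⟨s, α, γ, rfl⟩; exact (hνf _).1)
    · have := hfle y 0 0 0
      rw [G.gamma_zero', hν0] at this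
      exact this
  · -- additive
    intro y z
    refine le_csInf (hne _) ?_
    rintro r ⟨s, α, γ, rfl⟩
    have heq : G.mul x α (G.mul s γ (y + z))
        = G.mul x α (G.mul s γ y) + G.mul x α (G.mul s γ z) := by
      rw [G.mul_add', G.mul_add']
    rw [heq]
    calc min (ext G ν x y) (ext G ν x z)
        ≤ min (ν (G.mul x α (G.mul s γ y))) (ν (G.mul x α (G.mul s γ z))) :=
          min_le_min (hfle y s α γ) (hfle z s α γ)
      _ ≤ _ := hνadd _ _
  · -- multiplicative
    intro y z γ
    refine le_csInf (hne _) ?_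
    rintro r ⟨s, α, δ, rfl⟩
    have heq : G.mul x α (G.mul s δ (G.mul y γ z))
        = G.mul (G.mul x α (G.mul s δ y)) γ z := by
      rw [G.mul_assoc' s δ y γ z, G.mul_assoc' x α (G.mul s δ y) γ z]
    refine max_le ?_ ?_
    · rw [heq]
      calc ext G ν x y ≤ ν (G.mul x α (G.mul s δ y)) := hfle y s α δ
        _ ≤ max (ν (G.mul x α (G.mul s δ y))) (ν z) := le_max_left _ _
        _ ≤ _ := hνmul _ _ _
    · have heq2 : G.mul x α (G.mul s δ (G.mul y γ z))
          = G.mul x α (G.mul (G.mul s δ y) γ z) := by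
        rw [G.mul_assoc' s δ y γ z]
      rw [heq2]
      exact hfle z (G.mul s δ y) α γ
  · -- h-condition
    intro w a b z hz
    refine le_csInf (hne _) ?_
    rintro r ⟨s, α, γ, rfl⟩
    have hF : ∀ u v : S, G.mul x α (G.mul s γ (u + v))
        = G.mul x α (G.mul s γ u) + G.mul x α (G.mul s γ v) := by
      intro u v; rw [G.mul_add', G.mul_add']
    have heq : G.mul x α (G.mul s γ w) + G.mul x α (G.mul s γ a) + G.mul x α (G.mul s γ z)
        = G.mul x α (G.mul s γ b) + G.mul x α (G.mul s γ z) := by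
      rw [← hF, ← hF, ← hF, hz]
    have := hνh _ _ _ _ heq
    calc min (ext G ν x a) (ext G ν x b)
        ≤ min (ν (G.mul x α (G.mul s γ a))) (ν (G.mul x α (G.mul s γ b))) :=
          min_le_min (hfle a s α γ) (hfle b s α γ)
      _ ≤ _ := this
end

section
/- If μ is a fuzzy h-ideal of a Γ-hemiring S, β ∈ (0,1], and α ∈ [0, 1 − sup{μ(y) : y ∈ S}], then for any x ∈ S the extension ⟨x, μ_{β,α}⟩ is a fuzzy h-ideal of S, where μ_{β,α}(y) = β·μ(y) + α. -/
variable {S Γ : Type*} [AddCommMonoid S] [AddCommMonoid Γ]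

theorem extension_of_mu_beta_alpha (G : GammaHemiring S Γ) (μ : S → ℝ)
    (h : FuzzyHIdeal G μ) (β α : ℝ) (hβ0 : 0 < β) (hβ1 : β ≤ 1)
    (hα0 : 0 ≤ α) (hα1 : α ≤ 1 - sSup (Set.range μ)) (x : S) :
    FuzzyHIdeal G (ext G (fun y => β * μ y + α) x) := by
  obtain ⟨hf, hadd, hmul, hh⟩ := h
  set ν : S → ℝ := fun y => β * μ y + α with hνdef
  have hν0 : ∀ t, 0 ≤ ν t := fun t => add_nonneg (mul_nonneg hβ0.le (hf t).1) hα0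
  have hν1 : ∀ t, ν t ≤ 1 := by
    intro t
    have hb : BddAbove (Set.range μ) := ⟨1, by rintro r ⟨y, rfl⟩; exact (hf y).2⟩
    have hsup : μ t ≤ sSup (Set.range μ) := le_csSup hb (Set.mem_range_self t)
    have h1 : β * μ t ≤ μ t := by nlinarith [(hf t).1]
    simp only [hνdef]; linarith
  have hmono : ∀ a b : S, μ a ≤ μ b → ν a ≤ ν b := by
    intro a b hab; simp only [hνdef]; nlinarith
  have hνmin : ∀ a b c : S, min (μ a) (μ b) ≤ μ c → min (ν a) (ν b) ≤ ν c := by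
    intro a b c hc
    rcases le_total (μ a) (μ b) with hab | hab
    · rw [min_eq_left hab] at hc
      exact (min_le_left _ _).trans (hmono _ _ hc)
    · rw [min_eq_right hab] at hc
      exact (min_le_right _ _).trans (hmono _ _ hc)
  -- the sets
  set T : S → Set ℝ := fun y => {r : ℝ | ∃ (s : S) (a γ : Γ), r = ν (G.mul x a (G.mul s γ y))}
    with hTdef
  have hmem : ∀ (y s : S) (a γ : Γ), ν (G.mul x a (G.mul s γ y)) ∈ T y :=
    fun y s a γ => ⟨s, a, γ, rfl⟩
  have hne : ∀ y : S, (T y).Nonempty := by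
    intro y; exact ⟨ν (G.mul x 0 (G.mul y 0 y)), hmem y y 0 0⟩
  have hbdd : ∀ y : S, BddBelow (T y) := by
    intro y; refine ⟨0, ?_⟩
    rintro r ⟨s, a, γ, rfl⟩; exact hν0 _
  have hext : ∀ y : S, ext G ν x y = sInf (T y) := fun y => rfl
  refine ⟨?_, ?_, ?_, ?_⟩
  · intro y
    constructor
    · rw [hext]
      apply le_csInf (hne y)
      rintro r ⟨s, a, γ, rfl⟩; exact hν0 _
    · rw [hext]
      exact (csInf_le (hbdd y) (hmem y y 0 0)).trans (hν1 _)
  · intro y₁ y₂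
    rw [hext, hext, hext]
    apply le_csInf (hne _)
    rintro r ⟨s, a, γ, rfl⟩
    rw [G.mul_add', G.mul_add']
    calc min (sInf (T y₁)) (sInf (T y₂))
        ≤ min (ν (G.mul x a (G.mul s γ y₁))) (ν (G.mul x a (G.mul s γ y₂))) :=
          min_le_min (csInf_le (hbdd _) (hmem _ s a γ)) (csInf_le (hbdd _) (hmem _ s a γ))
      _ ≤ ν (G.mul x a (G.mul s γ y₁) + G.mul x a (G.mul s γ y₂)) :=
          hνmin _ _ _ (hadd _ _)
  · intro y₁ y₂ γ₀
    rw [hext, hext, hext]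
    apply le_csInf (hne _)
    rintro r ⟨s, a, γ, rfl⟩
    apply max_le
    · -- rewrite using associativity
      have e1 : G.mul x a (G.mul s γ (G.mul y₁ γ₀ y₂))
          = G.mul (G.mul x a (G.mul s γ y₁)) γ₀ y₂ := by
        rw [G.mul_assoc' s γ y₁ γ₀ y₂, G.mul_assoc']
      rw [e1]
      calc sInf (T y₁) ≤ ν (G.mul x a (G.mul s γ y₁)) := csInf_le (hbdd _) (hmem _ s a γ)
        _ ≤ ν (G.mul (G.mul x a (G.mul s γ y₁)) γ₀ y₂) :=
          hmono _ _ ((le_max_left _ _).trans (hmul _ _ _))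
    · have e2 : G.mul x a (G.mul s γ (G.mul y₁ γ₀ y₂))
          = G.mul x a (G.mul (G.mul s γ y₁) γ₀ y₂) := by
        rw [G.mul_assoc' s γ y₁ γ₀ y₂]
      rw [e2]
      exact csInf_le (hbdd _) (hmem _ _ a γ₀)
  · intro w a b z hz
    rw [hext, hext, hext]
    apply le_csInf (hne _)
    rintro r ⟨s, α', γ, rfl⟩
    have key : G.mul x α' (G.mul s γ w) + G.mul x α' (G.mul s γ a) + G.mul x α' (G.mul s γ z)
        = G.mul x α' (G.mul s γ b) + G.mul x α' (G.mul s γ z) := by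
      have d : ∀ u v : S, G.mul x α' (G.mul s γ (u + v))
          = G.mul x α' (G.mul s γ u) + G.mul x α' (G.mul s γ v) := by
        intro u v; rw [G.mul_add', G.mul_add']
      rw [← d, ← d, ← d, hz]
    calc min (sInf (T a)) (sInf (T b))
        ≤ min (ν (G.mul x α' (G.mul s γ a))) (ν (G.mul x α' (G.mul s γ b))) :=
          min_le_min (csInf_le (hbdd _) (hmem _ s α' γ)) (csInf_le (hbdd _) (hmem _ s α' γ))
      _ ≤ ν (G.mul x α' (G.mul s γ w)) := hνmin _ _ _ (hh _ _ _ _ key)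
end

section
/- Let μ be a fuzzy h-ideal of a Γ-hemiring S with μ(0) = 1 and Im μ = {1, t} for some t ∈ [0,1), and suppose μ₀ = {x ∈ S : μ(x) = 1} is a prime h-ideal of S (i.e., aΓSΓb ⊆ μ₀ implies a ∈ μ₀ or b ∈ μ₀). Then for all x, y ∈ S, inf over s ∈ S and α,γ ∈ Γ of μ(xαsγy) equals max(μ(x), μ(y)). -/
variable {S Γ : Type*} [AddCommMonoid S] [AddCommMonoid Γ]

/-- An h-ideal of a `Γ`-hemiring. -/
def IsHIdeal (G : GammaHemiring S Γ) (I : Set S) : Prop :=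
  (∀ a ∈ I, ∀ b ∈ I, a + b ∈ I) ∧
  (∀ a ∈ I, ∀ (s : S) (γ : Γ), G.mul s γ a ∈ I ∧ G.mul a γ s ∈ I) ∧
  (∀ x a b z : S, a ∈ I → b ∈ I → x + a + z = b + z → x ∈ I)

/-- A prime h-ideal: `aΓSΓb ⊆ I` implies `a ∈ I` or `b ∈ I`. -/
def IsPrimeHIdeal (G : GammaHemiring S Γ) (I : Set S) : Prop :=
  IsHIdeal G I ∧
  ∀ a b : S, (∀ (s : S) (α γ : Γ), G.mul a α (G.mul s γ b) ∈ I) → a ∈ I ∨ b ∈ I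

theorem prime_fuzzy_h_ideal_inf_eq_max (G : GammaHemiring S Γ) (μ : S → ℝ)
    (h : FuzzyHIdeal G μ) (h0 : μ 0 = 1) (t : ℝ) (ht0 : 0 ≤ t) (ht1 : t < 1)
    (hIm : Set.range μ = {1, t})
    (hprime : IsPrimeHIdeal G {x : S | μ x = 1}) :
    ∀ x y : S, ext G μ x y = max (μ x) (μ y) := by
  unfold ext
  intro x y
  have hμmem : ∀ z : S, μ z = 1 ∨ μ z = t := by
    intro z
    have : μ z ∈ ({1, t} : Set ℝ) := hIm ▸ Set.mem_range_self z
    simpa using this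
  obtain ⟨hf, hadd, hmul, hh⟩ := h
  have hlb : ∀ r ∈ {r : ℝ | ∃ (s : S) (α γ : Γ), r = μ (G.mul x α (G.mul s γ y))},
      max (μ x) (μ y) ≤ r := by
    rintro r ⟨s, α, γ, rfl⟩
    calc max (μ x) (μ y) ≤ max (μ x) (μ (G.mul s γ y)) :=
          max_le_max le_rfl (le_trans (le_max_right (μ s) (μ y)) (hmul s y γ))
      _ ≤ _ := hmul x (G.mul s γ y) α
  have hone : (1 : ℝ) ∈ {r : ℝ | ∃ (s : S) (α γ : Γ), r = μ (G.mul x α (G.mul s γ y))} := by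
    refine ⟨0, 0, 0, ?_⟩
    rw [G.zero_mul', G.mul_zero', h0]
  have hne : Set.Nonempty {r : ℝ | ∃ (s : S) (α γ : Γ), r = μ (G.mul x α (G.mul s γ y))} :=
    ⟨1, hone⟩
  have hbdd : BddBelow {r : ℝ | ∃ (s : S) (α γ : Γ), r = μ (G.mul x α (G.mul s γ y))} :=
    ⟨max (μ x) (μ y), hlb⟩
  refine le_antisymm ?_ (le_csInf hne hlb)
  by_cases hcase : μ x = 1 ∨ μ y = 1
  · have hmax : max (μ x) (μ y) = 1 := by
      rcases hcase with hx | hy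
      · exact le_antisymm (max_le (hf x).2 (hf y).2) (hx ▸ le_max_left _ _)
      · exact le_antisymm (max_le (hf x).2 (hf y).2) (hy ▸ le_max_right _ _)
    rw [hmax]
    exact csInf_le hbdd hone
  · push_neg at hcase
    obtain ⟨hx, hy⟩ := hcase
    have hxt : μ x = t := (hμmem x).resolve_left hx
    have hyt : μ y = t := (hμmem y).resolve_left hy
    have := hprime.2 x y
    have hnall : ¬ ∀ (s : S) (α γ : Γ), μ (G.mul x α (G.mul s γ y)) = 1 := by
      intro hall
      rcases this hall with h1 | h1
      · exact hx h1
      · exact hy h1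
    push_neg at hnall
    obtain ⟨s, α, γ, hs⟩ := hnall
    have hst : μ (G.mul x α (G.mul s γ y)) = t := (hμmem _).resolve_left hs
    have : t ∈ {r : ℝ | ∃ (s : S) (α γ : Γ), r = μ (G.mul x α (G.mul s γ y))} :=
      ⟨s, α, γ, hst.symm⟩
    have hle := csInf_le hbdd this
    rw [hxt, hyt, max_self]
    exact hle
end

section
/- Let μ be a fuzzy h-ideal of a Γ-hemiring S with Im μ = {1, t} for some t ∈ [0,1), and suppose that inf over s ∈ S and α,γ ∈ Γ of μ(xαsγy) equals max(μ(x), μ(y)) for all x, y ∈ S. Then μ₀ = {x ∈ S : μ(x) = 1} is a prime h-ideal of S. -/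
variable {S Γ : Type*} [AddCommMonoid S] [AddCommMonoid Γ]

theorem inf_eq_max_implies_prime (G : GammaHemiring S Γ) (μ : S → ℝ)
    (h : FuzzyHIdeal G μ) (t : ℝ) (ht0 : 0 ≤ t) (ht1 : t < 1)
    (hIm : Set.range μ = {1, t})
    (hmax : ∀ x y : S, ext G μ x y = max (μ x) (μ y)) :
    IsPrimeHIdeal G {x : S | μ x = 1} := by
  obtain ⟨hf, hadd, hmul, hh⟩ := h
  have hle1 : ∀ x, μ x ≤ 1 := fun x => (hf x).2
  constructor
  · refine ⟨?_, ?_, ?_⟩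
    · intro a ha b hb
      have := hadd a b
      simp only [Set.mem_setOf_eq] at ha hb ⊢
      rw [ha, hb] at this
      exact le_antisymm (hle1 _) (by simpa using this)
    · intro a ha s γ
      simp only [Set.mem_setOf_eq] at ha ⊢
      constructor
      · have := hmul s a γ
        rw [ha] at this
        exact le_antisymm (hle1 _) (le_trans (le_max_right _ _) this)
      · have := hmul a s γ
        rw [ha] at this
        exact le_antisymm (hle1 _) (le_trans (le_max_left _ _) this)
    · intro x a b z ha hb hz
      simp only [Set.mem_setOf_eq] at ha hb ⊢
      have := hh x a b z hz
      rw [ha, hb] at this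
      exact le_antisymm (hle1 _) (by simpa using this)
  · intro a b hab
    simp only [Set.mem_setOf_eq] at hab ⊢
    have hset : {r : ℝ | ∃ (s : S) (α γ : Γ), r = μ (G.mul a α (G.mul s γ b))} = {1} := by
      ext r
      simp only [Set.mem_setOf_eq, Set.mem_singleton_iff]
      constructor
      · rintro ⟨s, α, γ, rfl⟩; exact hab s α γ
      · rintro rfl; exact ⟨0, 0, 0, (hab 0 0 0).symm⟩
    have hext : ext G μ a b = 1 := by
      rw [ext, hset, csInf_singleton]
    rw [hmax a b] at hext
    rcases max_choice (μ a) (μ b) with hc | hc <;> rw [hc] at hext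
    · exact Or.inl hext
    · exact Or.inr hext
end

section
/- Let μ be a fuzzy h-ideal of a Γ-hemiring S satisfying inf_{s∈S, α,γ∈Γ} μ(xαsγy) = max(μ(x), μ(y)) for all x,y ∈ S. Then for all x, y ∈ S, ⟨x,μ⟩(y) = inf over s₁ ∈ S and η,δ ∈ Γ of ⟨xηs₁δx, μ⟩(y). -/
variable {S Γ : Type*} [AddCommMonoid S] [AddCommMonoid Γ]

theorem extension_eq_inf_extension_of_squares (G : GammaHemiring S Γ)
    (μ : S → ℝ) (h : FuzzyHIdeal G μ)
    (hmax : ∀ x y : S, ext G μ x y = max (μ x) (μ y)) :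
    ∀ x y : S, ext G μ x y =
      sInf {r : ℝ | ∃ (s₁ : S) (η δ : Γ),
        r = ext G μ (G.mul x η (G.mul s₁ δ x)) y} := by
  intro x y
  have hμ0 : ∀ z : S, 0 ≤ μ z := fun z => (h.1 z).1
  have hprod := h.2.2.1
  set T := {r : ℝ | ∃ (s₁ : S) (η δ : Γ),
      r = ext G μ (G.mul x η (G.mul s₁ δ x)) y} with hT
  have hTne : T.Nonempty := ⟨ext G μ (G.mul x 0 (G.mul x 0 x)) y, x, 0, 0, rfl⟩
  have hTbdd : BddBelow T := by
    refine ⟨0, fun r hr => ?_⟩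
    obtain ⟨s, η, δ, rfl⟩ := hr
    rw [hmax]
    exact le_trans (hμ0 _) (le_max_left _ _)
  rw [hmax x y]
  apply le_antisymm
  · apply le_csInf hTne
    intro r hr
    obtain ⟨s, η, δ, rfl⟩ := hr
    rw [hmax]
    exact max_le_max (le_trans (le_max_left _ _) (hprod x (G.mul s δ x) η)) le_rfl
  · apply le_of_forall_pos_le_add
    intro ε hε
    have hA : ext G μ x x = μ x := by rw [hmax, max_self]
    have hAne : {r : ℝ | ∃ (s : S) (α γ : Γ), r = μ (G.mul x α (G.mul s γ x))}.Nonempty :=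
      ⟨μ (G.mul x 0 (G.mul x 0 x)), x, 0, 0, rfl⟩
    have hlt : sInf {r : ℝ | ∃ (s : S) (α γ : Γ), r = μ (G.mul x α (G.mul s γ x))}
        < μ x + ε := by
      have : ext G μ x x < μ x + ε := by rw [hA]; linarith
      exact this
    obtain ⟨a, ha, halt⟩ := exists_lt_of_csInf_lt hAne hlt
    obtain ⟨s, α, γ, rfl⟩ := ha
    calc sInf T ≤ ext G μ (G.mul x α (G.mul s γ x)) y := csInf_le hTbdd ⟨s, α, γ, rfl⟩
      _ = max (μ (G.mul x α (G.mul s γ x))) (μ y) := hmax _ _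
      _ ≤ max (μ x) (μ y) + ε := by
          apply max_le
          · calc μ (G.mul x α (G.mul s γ x)) ≤ μ x + ε := le_of_lt halt
              _ ≤ max (μ x) (μ y) + ε := by gcongr; exact le_max_left _ _
          · calc μ y ≤ max (μ x) (μ y) := le_max_right _ _
              _ ≤ max (μ x) (μ y) + ε := by linarith
end

section
/- Let μ be a fuzzy h-ideal of a Γ-hemiring S with μ(0) = 1, Im μ = {1,t} for t ∈ [0,1), and μ₀ = {y : μ(y) = 1} a prime h-ideal of S. If x ∈ S with x ∉ μ₀, then ⟨x,μ⟩ = μ. -/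
variable {S Γ : Type*} [AddCommMonoid S] [AddCommMonoid Γ]

theorem extension_eq_self_of_not_mem (G : GammaHemiring S Γ) (μ : S → ℝ)
    (h : FuzzyHIdeal G μ) (h0 : μ 0 = 1) (t : ℝ) (ht0 : 0 ≤ t) (ht1 : t < 1)
    (hIm : Set.range μ = {1, t})
    (hprime : IsPrimeHIdeal G {y : S | μ y = 1})
    (x : S) (hx : μ x ≠ 1) :
    ext G μ x = μ := by
  obtain ⟨hfuz, hadd, hmul, hh⟩ := h
  have hval : ∀ z : S, μ z = 1 ∨ μ z = t := by
    intro z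
    have : μ z ∈ Set.range μ := ⟨z, rfl⟩
    rw [hIm] at this
    exact this
  funext y
  unfold ext
  have hmem1 : (1 : ℝ) ∈ {r : ℝ | ∃ (s : S) (α γ : Γ), r = μ (G.mul x α (G.mul s γ y))} := by
    refine ⟨0, 0, 0, ?_⟩
    rw [G.zero_mul', G.mul_zero', h0]
  have hlb : ∀ r ∈ {r : ℝ | ∃ (s : S) (α γ : Γ), r = μ (G.mul x α (G.mul s γ y))}, μ y ≤ r := by
    rintro r ⟨s, α, γ, rfl⟩
    calc μ y ≤ max (μ x) (μ (G.mul s γ y)) := le_max_of_le_right (le_max_right _ _ |>.trans (hmul s y γ))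
      _ ≤ μ (G.mul x α (G.mul s γ y)) := hmul x _ α
  rcases hval y with hy | hy
  · apply le_antisymm
    · rw [hy]
      exact csInf_le ⟨μ y, hlb⟩ hmem1
    · rw [hy]
      exact le_csInf ⟨1, hmem1⟩ (fun r hr => hy ▸ hlb r hr)
  · have hyne' : μ y ≠ 1 := by rw [hy]; exact ne_of_lt ht1
    obtain ⟨s, α, γ, hs⟩ : ∃ (s : S) (α γ : Γ), μ (G.mul x α (G.mul s γ y)) ≠ 1 := by
      by_contra hc
      push_neg at hc
      rcases hprime.2 x y (fun s α γ => hc s α γ) with h1 | h1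
      · exact hx h1
      · exact hyne' h1
    have hs' : μ (G.mul x α (G.mul s γ y)) = t := (hval _).resolve_left hs
    apply le_antisymm
    · rw [hy, ← hs']
      exact csInf_le ⟨μ y, hlb⟩ ⟨s, α, γ, rfl⟩
    · exact le_csInf ⟨1, hmem1⟩ hlb
end

section
/- Let μ be a fuzzy h-ideal of a Γ-hemiring S with Im μ = {1, t} for some t ∈ [0,1), and suppose ⟨x,μ⟩ = μ for every x ∈ S with μ(x) = t. Then inf_{s∈S, α,γ∈Γ} μ(xαsγy) = max(μ(x), μ(y)) for all x, y ∈ S. -/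
variable {S Γ : Type*} [AddCommMonoid S] [AddCommMonoid Γ]

theorem extension_eq_self_implies_inf_eq_max (G : GammaHemiring S Γ)
    (μ : S → ℝ) (h : FuzzyHIdeal G μ) (t : ℝ) (ht0 : 0 ≤ t) (ht1 : t < 1)
    (hIm : Set.range μ = {1, t})
    (hext : ∀ x : S, μ x = t → ext G μ x = μ) :
    ∀ x y : S, ext G μ x y = max (μ x) (μ y) := by
  obtain ⟨hf, hadd, hmul, hh⟩ := h
  intro x y
  have hmem : μ 0 ∈ {r : ℝ | ∃ (s : S) (α γ : Γ), r = μ (G.mul x α (G.mul s γ y))} :=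
    ⟨0, 0, 0, by rw [G.zero_mul', G.mul_zero']⟩
  have hne : {r : ℝ | ∃ (s : S) (α γ : Γ), r = μ (G.mul x α (G.mul s γ y))}.Nonempty :=
    ⟨μ 0, hmem⟩
  have hlb : ∀ r ∈ {r : ℝ | ∃ (s : S) (α γ : Γ), r = μ (G.mul x α (G.mul s γ y))},
      max (μ x) (μ y) ≤ r := by
    rintro r ⟨s, α, γ, rfl⟩
    have h1 := hmul x (G.mul s γ y) α
    have h2 := hmul s y γ
    have hx' : μ x ≤ μ (G.mul x α (G.mul s γ y)) := le_trans (le_max_left _ _) h1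
    have hy' : μ y ≤ μ (G.mul x α (G.mul s γ y)) :=
      le_trans (le_trans (le_max_right _ _) h2) (le_trans (le_max_right _ _) h1)
    exact max_le hx' hy'
  have hrange : ∀ z : S, μ z = 1 ∨ μ z = t := by
    intro z
    have : μ z ∈ Set.range μ := ⟨z, rfl⟩
    rw [hIm] at this
    exact this
  by_cases hx : μ x = t
  · by_cases hy : μ y = t
    · rw [show ext G μ x y = (ext G μ x) y from rfl, hext x hx, hx, hy, max_self]
    · have hy1 : μ y = 1 := (hrange y).resolve_right hy
      have hmax : max (μ x) (μ y) = 1 := by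
        rw [hx, hy1]; exact max_eq_right (le_of_lt ht1)
      rw [hmax]
      refine le_antisymm ?_ (le_csInf hne (by intro r hr; rw [← hmax]; exact hlb r hr))
      exact le_trans (csInf_le ⟨0, fun r hr => by
        obtain ⟨s, α, γ, rfl⟩ := hr; exact (hf _).1⟩ hmem) (hf 0).2
  · have hx1 : μ x = 1 := (hrange x).resolve_right hx
    have hmax : max (μ x) (μ y) = 1 := by
      rw [hx1]; exact max_eq_left (hf y).2
    rw [hmax]
    refine le_antisymm ?_ (le_csInf hne (by intro r hr; rw [← hmax]; exact hlb r hr))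
    exact le_trans (csInf_le ⟨0, fun r hr => by
      obtain ⟨s, α, γ, rfl⟩ := hr; exact (hf _).1⟩ hmem) (hf 0).2
end
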